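/- With e_c as above and r = 43;33 = 43 + 33/60, define ρ(θ_c) = √((a sin θ_c + b sin θ_c)² + (c + a cos θ_c − b cos θ_c)²) and e(θ_c, θ_p) = arcsin( r·sin(θ_p − e_c(θ_c)) / √( (r sin(θ_p − e_c(θ_c)))² + (ρ(θ_c) + r cos(θ_p − e_c(θ_c)))² ) ). Then e(2π − θ_c, 2π − θ_p) = −e(θ_c, θ_p) for all θ_c, θ_p. -/
import Mathlib


noncomputable section

/-- `a = P₃P₄ = 1;41` (sexagesimal) -/
def shatirA : ℝ := 101 / 60
/-- `b = P₄P₅ = 0;26` (sexagesimal) -/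
def shatirB : ℝ := 26 / 60
/-- `c = OP₃ = 60` -/
def shatirC : ℝ := 60
/-- epicycle radius `r = P₅P = 43;33` (sexagesimal) -/
def shatirR : ℝ := 43 + 33 / 60

/-- The distance `ρ(θ_c) = OP₅'` in Ibn al-Shatir's Venus model. -/
noncomputable def shatirRho (θ : ℝ) : ℝ :=
  Real.sqrt ((shatirA * Real.sin θ + shatirB * Real.sin θ) ^ 2 +
    (shatirC + shatirA * Real.cos θ - shatirB * Real.cos θ) ^ 2)

/-- Ibn al-Shatir's "equation of the center" for Venus. -/
noncomputable def eqCenter (θ : ℝ) : ℝ :=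
  -Real.arcsin ((shatirA * Real.sin θ + shatirB * Real.sin θ) / shatirRho θ)

/-- The second "equation" `e(θ_c, θ_p)` of Venus. -/
noncomputable def eqVenus (θc θp : ℝ) : ℝ :=
  Real.arcsin (shatirR * Real.sin (θp - eqCenter θc) /
    Real.sqrt ((shatirR * Real.sin (θp - eqCenter θc)) ^ 2 +
      (shatirRho θc + shatirR * Real.cos (θp - eqCenter θc)) ^ 2))


lemma shatirRho_even (θ : ℝ) : shatirRho (2 * Real.pi - θ) = shatirRho θ := by
  unfold shatirRho
  rw [Real.sin_sub, Real.cos_sub, Real.sin_two_pi, Real.cos_two_pi]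
  ring_nf

lemma eqCenter_odd (θ : ℝ) : eqCenter (2 * Real.pi - θ) = -eqCenter θ := by
  unfold eqCenter
  rw [shatirRho_even, Real.sin_sub, Real.sin_two_pi, Real.cos_two_pi]
  rw [show (shatirA * (0 * Real.cos θ - 1 * Real.sin θ) +
      shatirB * (0 * Real.cos θ - 1 * Real.sin θ)) =
      -(shatirA * Real.sin θ + shatirB * Real.sin θ) by ring]
  rw [neg_div, Real.arcsin_neg, neg_neg]

/-- `e(2π − θ_c, 2π − θ_p) = −e(θ_c, θ_p)` for all real `θ_c, θ_p`. -/
theorem eqVenus_odd (θc θp : ℝ) :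
    eqVenus (2 * Real.pi - θc) (2 * Real.pi - θp) = -eqVenus θc θp := by
  unfold eqVenus
  rw [eqCenter_odd, shatirRho_even]
  have h : 2 * Real.pi - θp - -eqCenter θc = 2 * Real.pi - (θp - eqCenter θc) := by
    ring
  rw [h]
  generalize θp - eqCenter θc = x
  rw [Real.sin_sub, Real.cos_sub, Real.sin_two_pi, Real.cos_two_pi,
    show shatirR * (0 * Real.cos x - 1 * Real.sin x) = -(shatirR * Real.sin x) from by ring,
    show 1 * Real.cos x + 0 * Real.sin x = Real.cos x from by ring,
    neg_sq, neg_div, Real.arcsin_neg]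

end
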